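/- arXiv:2205.01485 — 2 statements merged into one kernel-verified Lean document; each statement's English description precedes it below -/
import Mathlib

section
/- Let m = 2. For integers i, j with 1 ≤ i ≤ n_1−2, 1 ≤ j ≤ n_2−2 and i(n_2−j+1) ≤ n_1 (equivalently j ≥ (i(n_2+1)−n_1)/i), let Δ := ({0,…,i} × {0,…,j−1}) ∪ {(0,j)} ⊆ E. Then the monomial-Cartesian code C_Δ^P is an optimal (r,δ)-LRC with (r,δ) = (i+1, n_1−i), dimension k = (i+1)j+1 and minimum distance d = n_1(n_2−j). Symmetrically, for 1 ≤ j ≤ n_2−2, 1 ≤ i ≤ n_1−2 with j(n_1−i+1) ≤ n_2 and Δ := ({0,…,i−1} × {0,…,j}) ∪ {(i,0)}, the code C_Δ^P is an optimal (j+1, n_2−j)-LRC with k = (j+1)i+1 and d = n_2(n_1−i). -/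
/-- The set of evaluation points `P = P₁ × ⋯ × P_m`. -/
abbrev MCCPt {F : Type*} {m : ℕ} (P : Fin m → Finset F) : Type _ :=
  (j : Fin m) → {x // x ∈ P j}

/-- The evaluation vector of the monomial `X^e` at the points of `P`. -/
def evMon {F : Type*} [Field F] {m : ℕ} (P : Fin m → Finset F) (e : Fin m → ℕ) :
    MCCPt P → F :=
  fun x => ∏ j, (x j : F) ^ e j

/-- The monomial-Cartesian code `C_Δ^P = ev_P(V_Δ)`. -/
def MCC {F : Type*} [Field F] {m : ℕ} (P : Fin m → Finset F) (Δ : Finset (Fin m → ℕ)) :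
    Submodule F (MCCPt P → F) :=
  Submodule.span F (evMon P '' ↑Δ)

/-- The code `C ⊆ F^ι` has minimum Hamming distance exactly `d`. -/
def HasMinDist {F ι : Type*} [Field F] [DecidableEq F] [Fintype ι]
    (C : Submodule F (ι → F)) (d : ℕ) : Prop :=
  (∀ c ∈ C, c ≠ 0 → d ≤ hammingNorm c) ∧ ∃ c ∈ C, c ≠ 0 ∧ hammingNorm c = d

/-- The code `C ⊆ F^ι` is an `(r, δ)`-locally recoverable code. -/
def IsLRC {F ι : Type*} [Field F] [DecidableEq F] [DecidableEq ι] [Fintype ι]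
    (C : Submodule F (ι → F)) (r δ : ℕ) : Prop :=
  ∀ i : ι, ∃ R : Finset ι, i ∈ R ∧ R.card ≤ r + δ - 1 ∧
    ∀ c ∈ C, (∃ j ∈ R, c j ≠ 0) → δ ≤ (R.filter fun j => c j ≠ 0).card

/-- `C` is an optimal `(r, δ)`-LRC with dimension `k` and minimum distance `d`:
it is an `(r, δ)`-LRC attaining the Singleton-like bound
`k + d + (⌈k/r⌉ - 1)(δ - 1) = n + 1`. -/
def IsOptimalLRC {F ι : Type*} [Field F] [DecidableEq F] [DecidableEq ι] [Fintype ι]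
    (C : Submodule F (ι → F)) (k d r δ : ℕ) : Prop :=
  IsLRC C r δ ∧ Module.finrank F C = k ∧ HasMinDist C d ∧
    k + d + ((k + r - 1) / r - 1) * (δ - 1) = Fintype.card ι + 1

/-- The set `Δ³_{i,j} = ({0,…,i} × {0,…,j-1}) ∪ {(0,j)}`. -/
def Δ3 (i j : ℕ) : Finset (Fin 2 → ℕ) :=
  ((Finset.range (i + 1) ×ˢ Finset.range j).image fun p => ![p.1, p.2]) ∪ {![0, j]}

/-- The symmetric set `Δ³σ_{i,j} = ({0,…,i-1} × {0,…,j}) ∪ {(i,0)}`. -/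
def Δ3σ (i j : ℕ) : Finset (Fin 2 → ℕ) :=
  ((Finset.range i ×ˢ Finset.range (j + 1)).image fun p => ![p.1, p.2]) ∪ {![i, 0]}

/-!
A codeword of `C_Δ` is the evaluation on the grid `P₀ × P₁` of a polynomial `f(X, Y)` with
exponents in `Δ`. For `Δ = Δ³_{i,j}` every row `Y = y` carries a polynomial of degree `≤ i` in `X`,
which gives locality `(i + 1, n₁ - i)` along rows. For the distance, let `b ≤ j` be the `Y`-degree
of `f`. If `b = j`, the leading coefficient is a nonzero constant, so every column carries a nonzero
polynomial of degree `j` in `Y` and the weight is at least `n₁(n₂ - j)`. If `b < j`, the leading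
coefficient has degree `≤ i` in `X`, so at least `n₁ - i` columns carry a nonzero polynomial of
degree `< j`, and the weight is at least `(n₁ - i)(n₂ - j + 1) ≥ n₁(n₂ - j)` because
`i(n₂ - j + 1) ≤ n₁`. The codeword `∏_{t ∈ T} (Y - t)` with `T ⊆ P₁`, `#T = j`, attains the bound.
The dimension is `#Δ` by the combinatorial Nullstellensatz, and the symmetric family is the image
of the first one under swapping the two coordinates.
-/
open Finset Polynomial
open scoped Polynomial.Bivariate

section Dimension
variable {F : Type*} [Field F]

theorem linearIndependent_evMon {m : ℕ} (P : Fin m → Finset F) {Δ : Finset (Fin m → ℕ)}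
    (hΔ : ∀ e ∈ Δ, ∀ k, e k < #(P k)) :
    LinearIndependent F fun e : Δ => evMon P e := by
  rw [Fintype.linearIndependent_iff]
  intro g hg e₀
  let f : MvPolynomial (Fin m) F :=
    ∑ e : Δ, MvPolynomial.monomial (Finsupp.equivFunOnFinite.symm e) (g e)
  have hf : f = 0 := by
    refine MvPolynomial.eq_zero_of_eval_zero_at_prod_finset f P (fun k => ?_) fun x hx => ?_
    · refine (MvPolynomial.degreeOf_sum_le _ _ _).trans_lt <|
        (Finset.sup_lt_iff (hΔ e₀ e₀.2 k).bot_lt).2 fun e _ => ?_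
      refine lt_of_le_of_lt ?_ (hΔ e e.2 k)
      rw [MvPolynomial.degreeOf_le_iff]
      intro t ht
      simp [mem_singleton.1 (MvPolynomial.support_monomial_subset ht)]
    · simpa [f, evMon, MvPolynomial.eval_monomial, Finsupp.prod_fintype] using
        congrFun hg fun k => ⟨x k, hx k⟩
  simpa [f, MvPolynomial.coeff_sum, MvPolynomial.coeff_monomial] using
    congrArg (MvPolynomial.coeff (Finsupp.equivFunOnFinite.symm e₀)) hf

theorem finrank_MCC {m : ℕ} (P : Fin m → Finset F) {Δ : Finset (Fin m → ℕ)}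
    (hΔ : ∀ e ∈ Δ, ∀ k, e k < #(P k)) :
    Module.finrank F (MCC P Δ) = #Δ := by
  rw [MCC, Set.image_eq_range]
  exact (finrank_span_eq_card (linearIndependent_evMon P hΔ)).trans (Fintype.card_coe Δ)
end Dimension

section Reindex
variable {F : Type*} [Field F]

theorem MCC_image_comp_perm {m : ℕ} (P : Fin m → Finset F)
    (σ : Equiv.Perm (Fin m)) (Δ : Finset (Fin m → ℕ)) :
    MCC P (Δ.image (· ∘ σ)) = (MCC (fun k => P (σ.symm k)) Δ).map
      (LinearEquiv.funCongrLeft F F (Equiv.piCongrLeft' (fun k => P k) σ)).toLinearMap := by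
  rw [MCC, MCC, Submodule.map_span, coe_image, ← Set.image_comp, ← Set.image_comp]
  refine congrArg _ (Set.image_congr fun e _ => ?_)
  ext z
  simp only [Function.comp_apply, evMon, LinearEquiv.coe_coe, LinearEquiv.funCongrLeft_apply,
    LinearMap.funLeft_apply, Equiv.piCongrLeft'_apply]
  rw [← Equiv.prod_comp σ fun k => (z (σ.symm k) : F) ^ e k]
  refine prod_congr rfl fun k _ => ?_
  rw [Equiv.symm_apply_apply]

variable {ι κ : Type*} [DecidableEq F] [Fintype ι] [Fintype κ]

theorem hammingNorm_funCongrLeft (τ : ι ≃ κ) (c : κ → F) :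
    hammingNorm (LinearEquiv.funCongrLeft F F τ c) = hammingNorm c :=
  card_equiv τ fun i => by
    rw [mem_filter, mem_filter]
    simp [LinearMap.funLeft_apply]

theorem IsLRC.map_funCongrLeft [DecidableEq ι] [DecidableEq κ] {C : Submodule F (κ → F)}
    {r δ : ℕ} (h : IsLRC C r δ) (τ : ι ≃ κ) :
    IsLRC (C.map (LinearEquiv.funCongrLeft F F τ).toLinearMap) r δ := by
  intro i
  obtain ⟨R, hiR, hR, hδ⟩ := h (τ i)
  refine ⟨R.map τ.symm.toEmbedding, by simpa using hiR, by rwa [card_map], ?_⟩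
  rintro _ ⟨c, hc, rfl⟩ ⟨_, hjR, hcj⟩
  obtain ⟨j, hj, rfl⟩ := mem_map.1 hjR
  rw [filter_map, card_map]
  simpa [Function.comp_def] using hδ c hc ⟨j, hj, by simpa using hcj⟩

theorem HasMinDist.map_funCongrLeft {C : Submodule F (κ → F)} {d : ℕ} (h : HasMinDist C d)
    (τ : ι ≃ κ) : HasMinDist (C.map (LinearEquiv.funCongrLeft F F τ).toLinearMap) d := by
  obtain ⟨hle, c, hc, hc0, hcd⟩ := h
  refine ⟨?_, LinearEquiv.funCongrLeft F F τ c, Submodule.mem_map_of_mem hc,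
    (LinearEquiv.map_ne_zero_iff _).2 hc0, (hammingNorm_funCongrLeft τ c).trans hcd⟩
  rintro _ ⟨c, hc, rfl⟩ hc0
  exact (hammingNorm_funCongrLeft τ c).symm ▸ hle c hc ((LinearEquiv.map_ne_zero_iff _).1 hc0)

theorem IsOptimalLRC.map_funCongrLeft [DecidableEq ι] [DecidableEq κ] {C : Submodule F (κ → F)}
    {k d r δ : ℕ} (h : IsOptimalLRC C k d r δ) (τ : ι ≃ κ) :
    IsOptimalLRC (C.map (LinearEquiv.funCongrLeft F F τ).toLinearMap) k d r δ :=
  ⟨h.1.map_funCongrLeft τ, by rw [LinearEquiv.finrank_map_eq, h.2.1],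
    h.2.2.1.map_funCongrLeft τ, by rw [Fintype.card_congr τ]; exact h.2.2.2⟩

end Reindex

section Grid
variable {F : Type*} {P : Fin 2 → Finset F}

def gridPoint (x : P 0) (y : P 1) : MCCPt P := (piFinTwoEquiv _).symm (x, y)

@[simp] theorem gridPoint_zero (x : P 0) (y : P 1) : gridPoint x y 0 = x := rfl
@[simp] theorem gridPoint_one (x : P 0) (y : P 1) : gridPoint x y 1 = y := rfl

theorem gridPoint_eta (z : MCCPt P) : gridPoint (z 0) (z 1) = z :=
  (piFinTwoEquiv _).symm_apply_apply z

theorem hammingNorm_eq_sum_card [Zero F] [DecidableEq F] (c : MCCPt P → F) :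
    hammingNorm c = ∑ x : P 0, #{y : P 1 | c (gridPoint x y) ≠ 0} := by
  simp only [hammingNorm, card_filter]
  rw [← (piFinTwoEquiv _).symm.sum_comp, Fintype.sum_prod_type]
  rfl

end Grid

section Bivariate
variable {F : Type*} [Field F]

-- `X ^ e 0 * Y ^ e 1`: the inner variable `X` is evaluated at the first coordinate.
noncomputable def bimonomial (e : Fin 2 → ℕ) : F[X][Y] := monomial (e 1) (monomial (e 0) 1)

theorem coeff_coeff_eq_zero_of_mem_span {Δ : Set (Fin 2 → ℕ)} {f : F[X][Y]}
    (hf : f ∈ Submodule.span F (bimonomial '' Δ)) {a b : ℕ} (hab : ![a, b] ∉ Δ) :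
    (f.coeff b).coeff a = 0 := by
  induction hf using Submodule.span_induction with
  | mem g hg =>
    obtain ⟨e, he, rfl⟩ := hg
    have : e ≠ ![a, b] := fun h => hab (h ▸ he)
    simp only [bimonomial, coeff_monomial]
    split_ifs with h1
    · rw [coeff_monomial, if_neg]
      rintro rfl
      exact this (by ext k; fin_cases k <;> simp [h1])
    · rfl
  | zero => simp
  | add f g _ _ hf hg => simp [hf, hg]
  | smul c f _ hf => simp [hf]

variable (P : Fin 2 → Finset F)

noncomputable def evalGrid : F[X][Y] →ₗ[F] (MCCPt P → F) :=
  LinearMap.pi fun z => (aevalAeval (z 0 : F) (z 1 : F)).toLinearMap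

theorem evalGrid_apply (f : F[X][Y]) (z : MCCPt P) :
    evalGrid P f z = f.evalEval (z 0 : F) (z 1 : F) := by
  rw [evalGrid, LinearMap.pi_apply, AlgHom.toLinearMap_apply, coe_aevalAeval_eq_evalEval]

theorem MCC_eq_map_evalGrid (Δ : Finset (Fin 2 → ℕ)) :
    MCC P Δ = (Submodule.span F (bimonomial '' Δ)).map (evalGrid P) := by
  rw [MCC, Submodule.map_span, ← Set.image_comp]
  congr 1
  refine Set.image_congr fun e _ => funext fun z => ?_
  simp [evMon, bimonomial, evalGrid_apply, Fin.prod_univ_two, evalEval]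

theorem evalGrid_gridPoint (f : F[X][Y]) (x : P 0) (y : P 1) :
    evalGrid P f (gridPoint x y) = (f.map (evalRingHom (x : F))).eval (y : F) := by
  rw [evalGrid_apply, map_evalRingHom_eval, gridPoint_zero, gridPoint_one]

end Bivariate

section Bounds
variable {F : Type*} [Field F]

theorem natDegree_coeff_le_of_mem_span {Δ : Set (Fin 2 → ℕ)} {f : F[X][Y]}
    (hf : f ∈ Submodule.span F (bimonomial '' Δ)) {b d : ℕ} (h : ∀ a, d < a → ![a, b] ∉ Δ) :
    (f.coeff b).natDegree ≤ d :=
  natDegree_le_iff_coeff_eq_zero.2 fun a ha => coeff_coeff_eq_zero_of_mem_span hf (h a ha)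

theorem natDegree_le_of_mem_span {Δ : Set (Fin 2 → ℕ)} {f : F[X][Y]}
    (hf : f ∈ Submodule.span F (bimonomial '' Δ)) {d : ℕ} (h : ∀ a b, d < b → ![a, b] ∉ Δ) :
    f.natDegree ≤ d :=
  natDegree_le_iff_coeff_eq_zero.2 fun b hb =>
    Polynomial.ext fun a => coeff_coeff_eq_zero_of_mem_span hf (h a b hb)

theorem natDegree_eval_C_le {f : F[X][Y]} {d : ℕ} (h : ∀ b, (f.coeff b).natDegree ≤ d) (y : F) :
    (f.eval (C y)).natDegree ≤ d := by
  rw [eval_eq_sum_range]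
  refine natDegree_sum_le_of_forall_le _ _ fun b _ => ?_
  rw [← C_pow]
  exact (natDegree_mul_C_le _ _).trans (h b)

variable [DecidableEq F]

theorem card_sub_natDegree_le_card_eval_ne_zero (S : Finset F) {p : F[X]} (hp : p ≠ 0) :
    #S - p.natDegree ≤ #{x : S | p.eval (x : F) ≠ 0} := by
  have hroots : #{x : S | p.eval (x : F) = 0} ≤ p.natDegree := by
    rw [← card_map (Function.Embedding.subtype _)]
    refine card_le_degree_of_subset_roots fun x hx => ?_
    simp only [mem_val, mem_map, mem_filter] at hx
    obtain ⟨x, ⟨-, hx⟩, rfl⟩ := hx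
    exact (mem_roots hp).2 hx
  have := card_filter_add_card_filter_not (s := (univ : Finset S))
    (p := fun x => p.eval (x : F) = 0)
  rw [card_univ, Fintype.card_coe] at this
  simp only [ne_eq]
  omega

theorem card_mul_le_hammingNorm_evalGrid (P : Fin 2 → Finset F) (f : F[X][Y]) :
    #{x : P 0 | f.leadingCoeff.eval (x : F) ≠ 0} * (#(P 1) - f.natDegree) ≤
      hammingNorm (evalGrid P f) := by
  have hcolumn (x : P 0) (hx : f.leadingCoeff.eval (x : F) ≠ 0) :
      #(P 1) - f.natDegree ≤ #{y : P 1 | evalGrid P f (gridPoint x y) ≠ 0} := by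
    have hg : f.map (evalRingHom (x : F)) ≠ 0 := fun h => hx <| by
      rw [leadingCoeff]
      simpa only [coeff_map, coeff_zero, coe_evalRingHom] using congrArg (coeff · f.natDegree) h
    simp only [evalGrid_gridPoint]
    exact (Nat.sub_le_sub_left natDegree_map_le _).trans
      (card_sub_natDegree_le_card_eval_ne_zero (P 1) hg)
  rw [hammingNorm_eq_sum_card, ← smul_eq_mul]
  exact (card_nsmul_le_sum _ _ _ fun x hx => hcolumn x (mem_filter.1 hx).2).trans
    (sum_le_sum_of_subset (subset_univ _))

end Bounds

theorem mem_Δ3 {i j : ℕ} {e : Fin 2 → ℕ} :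
    e ∈ Δ3 i j ↔ e 0 ≤ i ∧ e 1 < j ∨ e 0 = 0 ∧ e 1 = j := by
  simp only [Δ3, mem_union, mem_image, mem_product, mem_range, mem_singleton, Prod.exists,
    funext_iff, Fin.forall_fin_two]
  constructor
  · rintro (⟨a, b, ⟨ha, hb⟩, rfl, rfl⟩ | ⟨h0, h1⟩)
    · omega
    · simp_all
  · rintro (⟨h0, h1⟩ | ⟨h0, h1⟩)
    · exact Or.inl ⟨e 0, e 1, ⟨by omega, h1⟩, by simp, by simp⟩
    · exact Or.inr ⟨by simp [h0], by simp [h1]⟩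

theorem card_Δ3 (i j : ℕ) : #(Δ3 i j) = (i + 1) * j + 1 := by
  rw [Δ3, card_union_of_disjoint, card_image_of_injective, card_product, card_range, card_range,
    card_singleton]
  · intro p q h
    simpa [funext_iff, Fin.forall_fin_two, Prod.ext_iff] using h
  · simp [funext_iff, Fin.forall_fin_two]

theorem mem_Δ3σ {i j : ℕ} {e : Fin 2 → ℕ} :
    e ∈ Δ3σ i j ↔ e 0 < i ∧ e 1 ≤ j ∨ e 0 = i ∧ e 1 = 0 := by
  simp only [Δ3σ, mem_union, mem_image, mem_product, mem_range, mem_singleton, Prod.exists,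
    funext_iff, Fin.forall_fin_two]
  constructor
  · rintro (⟨a, b, ⟨ha, hb⟩, rfl, rfl⟩ | ⟨h0, h1⟩)
    · omega
    · simp_all
  · rintro (⟨h0, h1⟩ | ⟨h0, h1⟩)
    · exact Or.inl ⟨e 0, e 1, ⟨h0, by omega⟩, by simp, by simp⟩
    · exact Or.inr ⟨by simp [h0], by simp [h1]⟩

theorem Δ3σ_eq_image (i j : ℕ) : Δ3σ i j = (Δ3 j i).image (· ∘ Fin.revPerm) := by
  ext e
  rw [mem_Δ3σ, mem_image]
  constructor
  · intro h
    exact ⟨![e 1, e 0], mem_Δ3.2 (by simp; omega), by ext k; fin_cases k <;> rfl⟩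
  · rintro ⟨a, ha, rfl⟩
    rw [mem_Δ3] at ha
    simp only [Function.comp_apply, Fin.revPerm_apply]
    exact ha.imp (fun h => ⟨h.2, h.1⟩) fun h => ⟨h.2, h.1⟩

theorem mul_sub_le_sub_mul_sub {m n i j b : ℕ} (hij : i * (n - j + 1) ≤ m) (hb : b < j) :
    m * (n - j) ≤ (m - i) * (n - b) := by
  rcases le_or_gt n j with hn | hn
  · simp [Nat.sub_eq_zero_of_le hn]
  obtain ⟨t, rfl⟩ := Nat.exists_eq_add_of_lt hn
  obtain ⟨s, rfl⟩ := Nat.exists_eq_add_of_le (le_trans (Nat.le_mul_of_pos_right _ (by omega)) hij)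
  have ht : j + t + 1 - j = t + 1 := by omega
  rw [ht] at hij
  rw [ht, Nat.add_sub_cancel_left]
  calc (i + s) * (t + 1) ≤ s * (t + 2) := by nlinarith
    _ ≤ s * (j + t + 1 - b) := Nat.mul_le_mul_left _ (by omega)

theorem singleton_bound_Δ3 {n₁ n₂ i j : ℕ} (hi : i < n₁) (hj : j < n₂) :
    (i + 1) * j + 1 + n₁ * (n₂ - j) + (((i + 1) * j + 1 + (i + 1) - 1) / (i + 1) - 1) *
      (n₁ - i - 1) = n₁ * n₂ + 1 := by
  have hk : (i + 1) * j + 1 + (i + 1) - 1 = (i + 1) * (j + 1) := by ring_nf; omega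
  obtain ⟨s, rfl⟩ := Nat.exists_eq_add_of_lt hi
  obtain ⟨t, rfl⟩ := Nat.exists_eq_add_of_lt hj
  rw [hk, Nat.mul_div_cancel_left _ i.succ_pos]
  simp only [Nat.add_sub_cancel, Nat.add_sub_cancel_left, Nat.add_assoc]
  ring_nf

section Codes
variable {F : Type*} [Field F] (P : Fin 2 → Finset F)

theorem eval_snd_mem_MCC {Δ : Finset (Fin 2 → ℕ)} {p : F[X]}
    (hp : ∀ b ≤ p.natDegree, ![0, b] ∈ Δ) : (fun z : MCCPt P => p.eval (z 1 : F)) ∈ MCC P Δ := by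
  have : (fun z : MCCPt P => p.eval (z 1 : F)) =
      ∑ b ∈ range (p.natDegree + 1), p.coeff b • evMon P ![0, b] := by
    ext z
    simp [eval_eq_sum_range, evMon, Fin.prod_univ_two]
  rw [this]
  exact Submodule.sum_mem _ fun b hb => Submodule.smul_mem _ _ <|
    Submodule.subset_span ⟨_, hp b (Nat.lt_succ_iff.1 (mem_range.1 hb)), rfl⟩

variable [DecidableEq F]

theorem isLRC_MCC_of_le {Δ : Finset (Fin 2 → ℕ)} {i : ℕ} (hΔ : ∀ e ∈ Δ, e 0 ≤ i) :
    IsLRC (MCC P Δ) (i + 1) (#(P 0) - i) := by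
  intro z₀
  have hinj : Function.Injective (gridPoint (P := P) · (z₀ 1)) := fun x x' h => by
    simpa using congrArg (· 0) h
  refine ⟨univ.image (gridPoint · (z₀ 1)), mem_image.2 ⟨z₀ 0, mem_univ _, gridPoint_eta z₀⟩,
    ?_, ?_⟩
  · rw [card_image_of_injective _ hinj, card_univ, Fintype.card_coe]
    omega
  · rintro _ hc ⟨z, hz, hcz⟩
    rw [MCC_eq_map_evalGrid] at hc
    obtain ⟨f, hf, rfl⟩ := hc
    have hrow (x : P 0) :
        evalGrid P f (gridPoint x (z₀ 1)) = (f.eval (C (z₀ 1 : F))).eval (x : F) :=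
      evalGrid_apply P f _
    have hdeg : (f.eval (C (z₀ 1 : F))).natDegree ≤ i :=
      natDegree_eval_C_le (fun b => natDegree_coeff_le_of_mem_span hf fun a ha h =>
        by have := hΔ _ h; simp at this; omega) _
    obtain ⟨x, -, rfl⟩ := mem_image.1 hz
    have hr : f.eval (C (z₀ 1 : F)) ≠ 0 := fun h => hcz (by rw [hrow, h, eval_zero])
    rw [filter_image, card_image_of_injective _ hinj]
    simp only [hrow]
    exact (Nat.sub_le_sub_left hdeg _).trans (card_sub_natDegree_le_card_eval_ne_zero _ hr)

theorem le_hammingNorm_of_mem_MCC_Δ3 {i j : ℕ} (hij : i * (#(P 1) - j + 1) ≤ #(P 0))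
    {c : MCCPt P → F} (hc : c ∈ MCC P (Δ3 i j)) (hc0 : c ≠ 0) :
    #(P 0) * (#(P 1) - j) ≤ hammingNorm c := by
  rw [MCC_eq_map_evalGrid] at hc
  obtain ⟨f, hf, rfl⟩ := hc
  have hf0 : f ≠ 0 := by rintro rfl; exact hc0 (map_zero _)
  have hlead : f.leadingCoeff ≠ 0 := leadingCoeff_ne_zero.2 hf0
  have hdeg : f.natDegree ≤ j := natDegree_le_of_mem_span hf fun a b hb h => by
    simp [mem_Δ3] at h; omega
  refine le_trans ?_ (card_mul_le_hammingNorm_evalGrid P f)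
  rcases hdeg.lt_or_eq with hlt | heq
  · have hcols : #(P 0) - i ≤ #{x : P 0 | f.leadingCoeff.eval (x : F) ≠ 0} :=
      (Nat.sub_le_sub_left (natDegree_coeff_le_of_mem_span hf fun a ha h => by
        simp [mem_Δ3] at h; omega) _).trans (card_sub_natDegree_le_card_eval_ne_zero _ hlead)
    calc #(P 0) * (#(P 1) - j) ≤ (#(P 0) - i) * (#(P 1) - f.natDegree) :=
          mul_sub_le_sub_mul_sub hij hlt
      _ ≤ _ := Nat.mul_le_mul_right _ hcols
  · have hconst : f.leadingCoeff.natDegree ≤ 0 :=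
      natDegree_coeff_le_of_mem_span hf fun a ha h => by simp [mem_Δ3, heq] at h; omega
    rw [eq_C_of_natDegree_le_zero hconst] at hlead ⊢
    rw [filter_true_of_mem fun x _ => by simpa using hlead, card_univ, Fintype.card_coe, heq]

theorem exists_mem_MCC_Δ3_hammingNorm_eq (i : ℕ) {j : ℕ} (hj : j ≤ #(P 1)) :
    ∃ c ∈ MCC P (Δ3 i j), hammingNorm c = #(P 0) * (#(P 1) - j) := by
  obtain ⟨T, -, hT⟩ := exists_subset_card_eq (s := (univ : Finset (P 1))) (n := j)
    (by rwa [card_univ, Fintype.card_coe])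
  let p : F[X] := ∏ t ∈ T, (X - C (t : F))
  have hp : p.natDegree = j := by simp [p, natDegree_prod_of_monic, monic_X_sub_C, hT]
  have hzeros (y : P 1) : p.eval (y : F) = 0 ↔ y ∈ T := by
    simp [p, eval_prod, prod_eq_zero_iff, sub_eq_zero]
  refine ⟨_, eval_snd_mem_MCC P (p := p) fun b hb => mem_Δ3.2 (by simp; omega), ?_⟩
  have hcol : ({y : P 1 | p.eval (y : F) ≠ 0} : Finset (P 1)) = Tᶜ := by ext y; simp [hzeros]
  calc hammingNorm _ = ∑ _x : P 0, #Tᶜ :=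
        (hammingNorm_eq_sum_card _).trans (sum_congr rfl fun _ _ => congrArg card hcol)
    _ = #(P 0) * (#(P 1) - j) := by simp [card_compl, hT]

theorem hasMinDist_MCC_Δ3 {i j : ℕ} (hi : i < #(P 0)) (hj : j < #(P 1))
    (hij : i * (#(P 1) - j + 1) ≤ #(P 0)) :
    HasMinDist (MCC P (Δ3 i j)) (#(P 0) * (#(P 1) - j)) := by
  refine ⟨fun c hc hc0 => le_hammingNorm_of_mem_MCC_Δ3 P hij hc hc0, ?_⟩
  obtain ⟨c, hc, hnorm⟩ := exists_mem_MCC_Δ3_hammingNorm_eq P i hj.le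
  refine ⟨c, hc, hammingNorm_pos_iff.1 ?_, hnorm⟩
  rw [hnorm]
  exact Nat.mul_pos (by omega) (by omega)

theorem isOptimalLRC_MCC_Δ3 {i j : ℕ} (hi : i < #(P 0)) (hj : j < #(P 1))
    (hij : i * (#(P 1) - j + 1) ≤ #(P 0)) :
    IsOptimalLRC (MCC P (Δ3 i j)) ((i + 1) * j + 1) (#(P 0) * (#(P 1) - j)) (i + 1)
      (#(P 0) - i) := by
  have hΔ (e) (he : e ∈ Δ3 i j) : e 0 ≤ i ∧ e 1 ≤ j := by rw [mem_Δ3] at he; omega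
  refine ⟨isLRC_MCC_of_le P fun e he => (hΔ e he).1, ?_, hasMinDist_MCC_Δ3 P hi hj hij, ?_⟩
  · rw [finrank_MCC P fun e he => Fin.forall_fin_two.2 (by have := hΔ e he; omega), card_Δ3]
  · rw [Fintype.card_pi, Fin.prod_univ_two, Fintype.card_coe, Fintype.card_coe]
    exact singleton_bound_Δ3 hi hj

end Codes

theorem mcc_rectwithp_optimal_general
    {F : Type*} [Field F] [DecidableEq F]
    (P : Fin 2 → Finset F) (hP : ∀ j, 2 ≤ (P j).card)
    (i j : ℕ) (hi2 : i ≤ (P 0).card - 2)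
    (hj2 : j ≤ (P 1).card - 2)
    (hij : i * ((P 1).card - j + 1) ≤ (P 0).card)
    (i' j' : ℕ) (hi'2 : i' ≤ (P 0).card - 2)
    (hj'2 : j' ≤ (P 1).card - 2)
    (hij' : j' * ((P 0).card - i' + 1) ≤ (P 1).card) :
    IsOptimalLRC (MCC P (Δ3 i j))
      ((i + 1) * j + 1) ((P 0).card * ((P 1).card - j)) (i + 1) ((P 0).card - i) ∧
    IsOptimalLRC (MCC P (Δ3σ i' j'))
      ((j' + 1) * i' + 1) ((P 1).card * ((P 0).card - i')) (j' + 1) ((P 1).card - j') := by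
  have h0 := hP 0
  have h1 := hP 1
  refine ⟨isOptimalLRC_MCC_Δ3 P (by omega) (by omega) hij, ?_⟩
  rw [Δ3σ_eq_image, MCC_image_comp_perm]
  exact (isOptimalLRC_MCC_Δ3 (fun k => P (Fin.revPerm.symm k)) (i := j') (j := i')
    (by show j' < #(P 1); omega) (by show i' < #(P 0); omega) hij').map_funCongrLeft _

/-- For `1 ≤ i ≤ n₁-2`, `1 ≤ j ≤ n₂-2` with `i(n₂-j+1) ≤ n₁`, the
monomial-Cartesian code on `Δ³_{i,j}` is an optimal `(i+1, n₁-i)`-LRC with dimension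
`(i+1)j+1` and minimum distance `n₁(n₂-j)`; symmetrically, for `1 ≤ j' ≤ n₂-2`,
`1 ≤ i' ≤ n₁-2` with `j'(n₁-i'+1) ≤ n₂`, the code on `Δ³σ_{i',j'}` is an optimal
`(j'+1, n₂-j')`-LRC with dimension `(j'+1)i'+1` and minimum distance `n₂(n₁-i')`. -/
theorem mcc_rectwithp_optimal
    {F : Type*} [Field F] [Fintype F] [DecidableEq F]
    (P : Fin 2 → Finset F) (hP : ∀ j, 2 ≤ (P j).card)
    (i j : ℕ) (hi1 : 1 ≤ i) (hi2 : i ≤ (P 0).card - 2)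
    (hj1 : 1 ≤ j) (hj2 : j ≤ (P 1).card - 2)
    (hij : i * ((P 1).card - j + 1) ≤ (P 0).card)
    (i' j' : ℕ) (hi'1 : 1 ≤ i') (hi'2 : i' ≤ (P 0).card - 2)
    (hj'1 : 1 ≤ j') (hj'2 : j' ≤ (P 1).card - 2)
    (hij' : j' * ((P 0).card - i' + 1) ≤ (P 1).card) :
    IsOptimalLRC (MCC P (Δ3 i j))
      ((i + 1) * j + 1) ((P 0).card * ((P 1).card - j)) (i + 1) ((P 0).card - i) ∧
    IsOptimalLRC (MCC P (Δ3σ i' j'))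
      ((j' + 1) * i' + 1) ((P 1).card * ((P 0).card - i')) (j' + 1) ((P 1).card - j') :=
  mcc_rectwithp_optimal_general P hP i j hi2 hj2 hij i' j' hi'2 hj'2 hij'
end

section
/- Let F_q be a finite field and let m ≥ 3 be an integer. For every m-tuple (n_1,…,n_m) of integers with 2 ≤ n_j ≤ q for all j, there exists an optimal (r,δ)-LRC over F_q of length n = n_1⋯n_m with dimension k, minimum distance d and locality (r,δ) as follows, for any j_0 ∈ {1,…,m}: (1) k = (i_{j_0}+1)∏_{j≠j_0} n_j, d = n_{j_0}−i_{j_0} and (r,δ) = (i_{j_0}+1, n_{j_0}−i_{j_0}), where i_{j_0} ∈ {0,…,n_{j_0}−2}; (2) k = (i_{j_0}+1)∏_{j≠j_0} n_j − (i_{j_0}−s+1), d = n_{j_0}−s+1 and (r,δ) = (i_{j_0}+1, n_{j_0}−i_{j_0}), where max{1, 2i_{j_0}−n_{j_0}+1} ≤ s ≤ i_{j_0} ≤ n_{j_0}−2; (3) k = ∏_{j≠j_0} n_j − 1, d = 2n_{j_0} and (r,δ) = (1, n_{j_0}). -/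
/-- There exists a linear code over `F` of length `n`, dimension `k` and minimum distance `d`
which is an optimal `(r, δ)`-LRC, i.e. attaining the Singleton-like bound
`k + d + (⌈k/r⌉ - 1)(δ - 1) = n + 1`. -/
def IsOptimalLRCParams (F : Type*) [Field F] [DecidableEq F] (n k d r δ : ℕ) : Prop :=
  ∃ C : Submodule F (Fin n → F),
    Module.finrank F C = k ∧ HasMinDist C d ∧ IsLRC C r δ ∧
      k + d + ((k + r - 1) / r - 1) * (δ - 1) = n + 1

/-! Index the coordinates by pairs `(t, p)`: `t` runs over the `∏_{j ≠ j₀} n_j` lines of the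
grid in direction `j₀`, and `p` over `n_{j₀}` distinct points `α p ∈ F`. The codewords of
`blockCode` are `(t, p) ↦ g_t(α p)` with `deg g_t < M` for all `t` and `deg (∑ t, g_t) < s`.
On each line this is a Reed–Solomon code of distance `n_{j₀} + 1 - M`, which gives the locality.
A nonzero codeword either lives on two lines, so has weight `≥ 2 (n_{j₀} + 1 - M)`, or on a
single line `t`, where `g_t = ∑ t, g_t` has degree `< s` and hence weight `≥ n_{j₀} + 1 - s`;
nodal polynomials attain these bounds. Families (1), (2), (3) are `(M, s) = (i₀ + 1, i₀ + 1)`,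
`(i₀ + 1, s)` and `(1, 0)`, for which the Singleton-like bound becomes an identity of natural
numbers. -/

open Finset Polynomial

section Evaluation

variable {F ι : Type*} [Field F] [DecidableEq F] [Fintype ι] (α : ι ↪ F)

theorem card_sub_natDegree_le_hammingNorm_eval {f : F[X]} (hf : f ≠ 0) :
    Fintype.card ι - f.natDegree ≤ hammingNorm fun p => f.eval (α p) := by
  classical
  have hzeros : #{p | f.eval (α p) = 0} ≤ f.natDegree := by
    rw [← card_map α]
    refine card_le_degree_of_subset_roots fun x hx => ?_
    obtain ⟨p, hp, rfl⟩ := mem_map.mp hx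
    exact (mem_roots hf).mpr (mem_filter.mp hp).2
  have hsplit := card_filter_add_card_filter_not (s := univ) fun p => f.eval (α p) = 0
  rw [card_univ] at hsplit
  simp only [hammingNorm, ne_eq]
  omega

theorem card_add_one_sub_le_hammingNorm_eval {f : F[X]} {D : ℕ} (hf : f ≠ 0)
    (hD : f ∈ degreeLT F D) : Fintype.card ι + 1 - D ≤ hammingNorm fun p => f.eval (α p) := by
  have hdeg : f.natDegree < D := (natDegree_lt_iff_degree_lt hf).mpr (mem_degreeLT.mp hD)
  have := card_sub_natDegree_le_hammingNorm_eval α hf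
  omega

theorem exists_monic_hammingNorm_eval_eq {t : ℕ} (ht : t ≤ Fintype.card ι) :
    ∃ f : F[X], f.Monic ∧ f.natDegree = t ∧
      hammingNorm (fun p => f.eval (α p)) = Fintype.card ι - t := by
  classical
  obtain ⟨S, -, hS⟩ := exists_subset_card_eq (s := (univ : Finset ι)) (by simpa using ht)
  refine ⟨Lagrange.nodal S α, Lagrange.nodal_monic, by rw [Lagrange.natDegree_nodal, hS], ?_⟩
  have hroots : ∀ p, (Lagrange.nodal S α).eval (α p) ≠ 0 ↔ p ∉ S := by
    refine fun p => ⟨fun h hp => h (Lagrange.eval_nodal_at_node hp), fun hp => ?_⟩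
    exact Lagrange.eval_nodal_not_at_node fun q hq h => hp (α.injective h ▸ hq)
  simp only [hammingNorm, hroots, filter_notMem_eq_sdiff, ← compl_eq_univ_sdiff, card_compl, hS]

end Evaluation

section Blocks

variable {F κ ι : Type*} [Field F] [DecidableEq F] [Fintype κ] [Fintype ι]

theorem hammingNorm_prod_eq_sum (c : κ × ι → F) :
    hammingNorm c = ∑ t, hammingNorm fun p => c (t, p) := by
  simp only [hammingNorm, card_filter, Fintype.sum_prod_type]

theorem isLRC_of_hammingNorm_block [DecidableEq κ] [DecidableEq ι] {C : Submodule F (κ × ι → F)}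
    {r δ : ℕ} (hcard : Fintype.card ι ≤ r + δ - 1)
    (hblock : ∀ c ∈ C, ∀ t, (fun p => c (t, p)) ≠ 0 → δ ≤ hammingNorm fun p => c (t, p)) :
    IsLRC C r δ := by
  rintro ⟨t, p⟩
  refine ⟨univ.map (Function.Embedding.sectR t ι), by simp, by simpa using hcard, ?_⟩
  rintro c hc ⟨j, hj, hcj⟩
  obtain ⟨q, -, rfl⟩ := mem_map.mp hj
  rw [filter_map, card_map]
  exact hblock c hc t fun h => hcj (congrFun h q)

end Blocks

section Reindex

variable {F ι κ : Type*} [Field F] [DecidableEq F] [Fintype ι] [Fintype κ]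

theorem hammingNorm_comp_equiv (e : ι ≃ κ) (c : κ → F) : hammingNorm (c ∘ e) = hammingNorm c :=
  card_equiv e (by simp)

theorem hasMinDist_map_funCongrLeft (e : ι ≃ κ) {C : Submodule F (κ → F)} {d : ℕ}
    (hd : HasMinDist C d) : HasMinDist (C.map (LinearEquiv.funCongrLeft F F e).toLinearMap) d := by
  obtain ⟨hle, c, hc, hc0, hcd⟩ := hd
  have hnorm (c : κ → F) : hammingNorm (LinearEquiv.funCongrLeft F F e c) = hammingNorm c :=
    hammingNorm_comp_equiv e c
  refine ⟨?_, _, Submodule.mem_map_of_mem hc, (LinearEquiv.map_ne_zero_iff _).mpr hc0,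
    (hnorm c).trans hcd⟩
  rintro _ ⟨c, hc, rfl⟩ hc0
  exact (hnorm c).symm ▸ hle c hc fun h => hc0 (by simp [h])

theorem isLRC_map_funCongrLeft [DecidableEq ι] [DecidableEq κ] (e : ι ≃ κ)
    {C : Submodule F (κ → F)} {r δ : ℕ} (h : IsLRC C r δ) :
    IsLRC (C.map (LinearEquiv.funCongrLeft F F e).toLinearMap) r δ := by
  intro i
  obtain ⟨R, hiR, hRcard, hR⟩ := h (e i)
  refine ⟨R.map e.symm.toEmbedding, by simpa using hiR, by simpa using hRcard, ?_⟩
  rintro _ ⟨c, hc, rfl⟩ ⟨j, hj, hcj⟩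
  have hL (j : ι) : LinearEquiv.funCongrLeft F F e c j = c (e j) := rfl
  obtain ⟨x, hx, rfl⟩ := mem_map.mp hj
  rw [filter_map, card_map]
  simp only [Function.comp_def, LinearEquiv.coe_coe, hL, Equiv.coe_toEmbedding,
    Equiv.apply_symm_apply] at hcj ⊢
  exact hR c hc ⟨x, hx, hcj⟩

end Reindex

section SumHighCoeffs

variable {F κ : Type*} [Field F] [Fintype κ]

variable (F κ) in
noncomputable def sumHighCoeffs (M s : ℕ) : (κ → degreeLT F M) →ₗ[F] Fin (M - s) → F :=
  LinearMap.funLeft F F (fun u : Fin (M - s) => (⟨s + u, by omega⟩ : Fin M)) ∘ₗ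
    (degreeLTEquiv F M).toLinearMap ∘ₗ ∑ t, LinearMap.proj t

theorem sumHighCoeffs_apply {M s : ℕ} (g : κ → degreeLT F M) (u : Fin (M - s)) :
    sumHighCoeffs F κ M s g u = (∑ t, (g t : F[X])).coeff (s + u) := by
  simp [sumHighCoeffs, degreeLTEquiv]

theorem sumHighCoeffs_surjective [Nonempty κ] (M s : ℕ) :
    Function.Surjective (sumHighCoeffs F κ M s) := by
  classical
  obtain ⟨t⟩ := ‹Nonempty κ›
  have hsum : Function.Surjective (∑ t, LinearMap.proj t : (κ → degreeLT F M) →ₗ[F] _) :=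
    fun y => ⟨Pi.single t y, by simp [Finset.sum_pi_single']⟩
  rw [sumHighCoeffs, LinearMap.coe_comp, LinearMap.coe_comp]
  refine (LinearMap.funLeft_surjective_of_injective _ _ _ ?_).comp
    ((degreeLTEquiv F M).surjective.comp hsum)
  intro u v h
  simpa [Fin.ext_iff] using h

theorem mem_ker_sumHighCoeffs {M s : ℕ} {g : κ → degreeLT F M} :
    g ∈ LinearMap.ker (sumHighCoeffs F κ M s) ↔ ∑ t, (g t : F[X]) ∈ degreeLT F s := by
  have hM : ∑ t, (g t : F[X]) ∈ degreeLT F M := Submodule.sum_mem _ fun t _ => (g t).2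
  rw [mem_degreeLT, degree_lt_iff_coeff_zero] at hM ⊢
  rw [LinearMap.mem_ker, funext_iff]
  simp only [sumHighCoeffs_apply, Pi.zero_apply]
  refine ⟨fun h k hk => ?_, fun h u => h _ (Nat.le_add_right s u)⟩
  rcases lt_or_ge k M with hkM | hkM
  · simpa [Nat.add_sub_cancel' hk] using h ⟨k - s, by omega⟩
  · exact hM k hkM

theorem finrank_ker_sumHighCoeffs [Nonempty κ] (M s : ℕ) :
    Module.finrank F (LinearMap.ker (sumHighCoeffs F κ M s)) = M * Fintype.card κ - (M - s) := by
  have h := LinearMap.finrank_range_add_finrank_ker (sumHighCoeffs F κ M s)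
  rw [LinearMap.range_eq_top.mpr (sumHighCoeffs_surjective M s), finrank_top,
    Module.finrank_fintype_fun_eq_card, Fintype.card_fin, Module.finrank_pi_fintype] at h
  simp only [Module.finrank_eq_card_basis (degreeLT.basis F M), Fintype.card_fin, sum_const,
    card_univ, smul_eq_mul] at h
  rw [mul_comm]
  omega

end SumHighCoeffs

section BlockCode

variable {F κ ι : Type*} [Field F] [Fintype ι] (α : ι ↪ F)

def blockEval (M : ℕ) : (κ → degreeLT F M) →ₗ[F] κ × ι → F where
  toFun g tp := (g tp.1 : F[X]).eval (α tp.2)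
  map_add' g h := by ext; simp
  map_smul' a g := by ext; simp

variable (κ) in
noncomputable def blockCode [Fintype κ] (M s : ℕ) : Submodule F (κ × ι → F) :=
  (LinearMap.ker (sumHighCoeffs F κ M s)).map (blockEval α M)

variable {M s : ℕ}

theorem blockEval_injective (hM : M ≤ Fintype.card ι) :
    Function.Injective (blockEval (κ := κ) α M) := by
  classical
  rw [← LinearMap.ker_eq_bot, LinearMap.ker_eq_bot']
  intro g hg
  funext t
  by_contra hgt
  have hzero : (fun p => (g t : F[X]).eval (α p)) = 0 := funext fun p => congrFun hg (t, p)
  have h := card_add_one_sub_le_hammingNorm_eval α (by simpa using hgt) (g t).2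
  rw [hzero, hammingNorm_zero] at h
  omega

variable [Fintype κ]

theorem hammingNorm_blockEval [DecidableEq F] (g : κ → degreeLT F M) :
    hammingNorm (blockEval α M g) = ∑ t, hammingNorm fun p => (g t : F[X]).eval (α p) :=
  hammingNorm_prod_eq_sum _

theorem finrank_blockCode [Nonempty κ] (hM : M ≤ Fintype.card ι) :
    Module.finrank F (blockCode κ α M s) = M * Fintype.card κ - (M - s) := by
  rw [blockCode, ← (Submodule.equivMapOfInjective _ (blockEval_injective α hM) _).finrank_eq,
    finrank_ker_sumHighCoeffs]

theorem le_hammingNorm_of_mem_blockCode [DecidableEq F] {c : κ × ι → F}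
    (hc : c ∈ blockCode κ α M s) (hc0 : c ≠ 0) :
    2 * (Fintype.card ι + 1 - M) ≤ hammingNorm c ∨
      0 < s ∧ Fintype.card ι + 1 - s ≤ hammingNorm c := by
  obtain ⟨g, hg, rfl⟩ := hc
  rw [SetLike.mem_coe, mem_ker_sumHighCoeffs] at hg
  obtain ⟨t, ht⟩ : ∃ t, g t ≠ 0 := by
    by_contra! h
    exact hc0 (by rw [funext h]; exact map_zero _)
  set w : κ → ℕ := fun t => hammingNorm fun p => (g t : F[X]).eval (α p)
  have hblock (t : κ) (ht : g t ≠ 0) : Fintype.card ι + 1 - M ≤ w t :=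
    card_add_one_sub_le_hammingNorm_eval α (by simpa using ht) (g t).2
  rw [hammingNorm_blockEval]
  by_cases hsingle : ∀ t' ≠ t, g t' = 0
  · right
    rw [Fintype.sum_eq_single t fun t' h => by simp [hsingle t' h]] at hg
    have hs : 0 < s := Nat.pos_of_ne_zero fun hs => ht (by simpa [hs, mem_degreeLT] using hg)
    exact ⟨hs, (card_add_one_sub_le_hammingNorm_eval α (by simpa using ht) hg).trans
      (single_le_sum (f := w) (fun _ _ => Nat.zero_le _) (mem_univ t))⟩
  · left
    push Not at hsingle
    obtain ⟨t', htt', ht'⟩ := hsingle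
    calc 2 * (Fintype.card ι + 1 - M) ≤ w t + w t' := by
          have := hblock t ht; have := hblock t' ht'; omega
      _ ≤ ∑ t, w t := add_le_sum (fun _ _ => Nat.zero_le _) (mem_univ t) (mem_univ t') htt'.symm

theorem exists_hammingNorm_eq_of_mem_blockCode_of_pos [DecidableEq F] [Nonempty κ]
    (hs : 0 < s) (hsM : s ≤ M) (hsι : s ≤ Fintype.card ι + 1) :
    ∃ c ∈ blockCode κ α M s, hammingNorm c = Fintype.card ι + 1 - s := by
  classical
  obtain ⟨t⟩ := ‹Nonempty κ›
  obtain ⟨f, hf, hfdeg, hfw⟩ := exists_monic_hammingNorm_eval_eq α (t := s - 1) (by omega)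
  have hfs : f ∈ degreeLT F s := by
    rw [mem_degreeLT, degree_eq_natDegree hf.ne_zero, hfdeg]
    exact_mod_cast Nat.sub_lt hs one_pos
  let g : κ → degreeLT F M := Pi.single t ⟨f, degreeLT_mono hsM hfs⟩
  have hg (t' : κ) : (g t' : F[X]) = (Pi.single t f : κ → F[X]) t' := by
    simp only [g, Pi.single_apply]
    split_ifs <;> rfl
  refine ⟨blockEval α M g, ⟨g, mem_ker_sumHighCoeffs.mpr ?_, rfl⟩, ?_⟩
  · simpa [hg] using hfs
  · rw [hammingNorm_blockEval, Fintype.sum_eq_single t fun t' h => by simp [hg, h, Pi.zero_def],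
      hg, Pi.single_eq_same, hfw]
    omega

theorem exists_hammingNorm_eq_two_mul_of_mem_blockCode [DecidableEq F] {t₁ t₂ : κ}
    (ht : t₁ ≠ t₂) (hM : 0 < M) (hMι : M ≤ Fintype.card ι + 1) :
    ∃ c ∈ blockCode κ α M s, hammingNorm c = 2 * (Fintype.card ι + 1 - M) := by
  classical
  obtain ⟨f, hf, hfdeg, hfw⟩ := exists_monic_hammingNorm_eval_eq α (t := M - 1) (by omega)
  have hfM : f ∈ degreeLT F M := by
    rw [mem_degreeLT, degree_eq_natDegree hf.ne_zero, hfdeg]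
    exact_mod_cast Nat.sub_lt hM one_pos
  let g : κ → degreeLT F M := Pi.single t₁ ⟨f, hfM⟩ - Pi.single t₂ ⟨f, hfM⟩
  have hg (t : κ) :
      (g t : F[X]) = (Pi.single t₁ f : κ → F[X]) t - (Pi.single t₂ f : κ → F[X]) t := by
    simp only [g, Pi.sub_apply, Submodule.coe_sub, Pi.single_apply]
    split_ifs <;> rfl
  refine ⟨blockEval α M g, ⟨g, mem_ker_sumHighCoeffs.mpr ?_, rfl⟩, ?_⟩
  · simp [hg, sum_sub_distrib]
  · rw [hammingNorm_blockEval,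
      Fintype.sum_eq_add t₁ t₂ ht fun t h => by simp [hg, h.1, h.2, Pi.zero_def]]
    simp only [hg, Pi.single_eq_same, Pi.single_eq_of_ne ht, Pi.single_eq_of_ne ht.symm,
      sub_zero, zero_sub, eval_neg]
    rw [hammingNorm_comp (fun _ x => -x) (fun _ => neg_injective) (fun _ => neg_zero), hfw]
    omega

theorem hasMinDist_blockCode_of_pos [DecidableEq F] [Nonempty κ] (hs : 0 < s)
    (hsM : s ≤ M) (hsι : s ≤ Fintype.card ι)
    (hd : Fintype.card ι + 1 - s ≤ 2 * (Fintype.card ι + 1 - M)) :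
    HasMinDist (blockCode κ α M s) (Fintype.card ι + 1 - s) := by
  refine ⟨fun c hc hc0 => ?_, ?_⟩
  · rcases le_hammingNorm_of_mem_blockCode α hc hc0 with h | ⟨-, h⟩ <;> omega
  · obtain ⟨c, hc, hcw⟩ :=
      exists_hammingNorm_eq_of_mem_blockCode_of_pos (κ := κ) α hs hsM (by omega)
    exact ⟨c, hc, hammingNorm_pos_iff.mp (by omega), hcw⟩

theorem hasMinDist_blockCode_zero [DecidableEq F] {t₁ t₂ : κ} (ht : t₁ ≠ t₂)
    (hM : 0 < M) (hMι : M ≤ Fintype.card ι) :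
    HasMinDist (blockCode κ α M 0) (2 * (Fintype.card ι + 1 - M)) := by
  refine ⟨fun c hc hc0 => ?_, ?_⟩
  · rcases le_hammingNorm_of_mem_blockCode α hc hc0 with h | ⟨h, -⟩
    · exact h
    · exact absurd h (lt_irrefl 0)
  · obtain ⟨c, hc, hcw⟩ := exists_hammingNorm_eq_two_mul_of_mem_blockCode α ht hM (by omega)
    exact ⟨c, hc, hammingNorm_pos_iff.mp (by omega), hcw⟩

theorem isLRC_blockCode [DecidableEq F] [DecidableEq κ] [DecidableEq ι] :
    IsLRC (blockCode κ α M s) M (Fintype.card ι + 1 - M) := by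
  refine isLRC_of_hammingNorm_block (by omega) ?_
  rintro _ ⟨g, -, rfl⟩ t hblock
  refine card_add_one_sub_le_hammingNorm_eval α (fun h => hblock ?_) (g t).2
  funext p
  simp [blockEval, h]

end BlockCode

theorem isOptimalLRCParams_of_equiv {F ι : Type*} [Field F] [DecidableEq F] [Fintype ι]
    [DecidableEq ι] {n k d r δ : ℕ} (e : Fin n ≃ ι) (C : Submodule F (ι → F))
    (hk : Module.finrank F C = k) (hd : HasMinDist C d) (hr : IsLRC C r δ)
    (hbound : k + d + ((k + r - 1) / r - 1) * (δ - 1) = n + 1) :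
    IsOptimalLRCParams F n k d r δ :=
  ⟨C.map (LinearEquiv.funCongrLeft F F e).toLinearMap, by rw [LinearEquiv.finrank_map_eq, hk],
    hasMinDist_map_funCongrLeft e hd, isLRC_map_funCongrLeft e hr, hbound⟩

theorem lrc_singleton_bound_eq_of_pos {N n₀ M s : ℕ} (hN : 0 < N) (hs : 0 < s) (hsM : s ≤ M)
    (hM : M ≤ n₀) :
    (M * N - (M - s)) + (n₀ + 1 - s) + ((M * N - (M - s) + M - 1) / M - 1) * (n₀ + 1 - M - 1) =
      N * n₀ + 1 := by
  have hMN : M ≤ M * N := Nat.le_mul_of_pos_right M hN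
  have hceil : (M * N - (M - s) + M - 1) / M = N := by
    rw [show M * N - (M - s) + M - 1 = M * N + (s - 1) by omega, Nat.mul_add_div (by omega),
      Nat.div_eq_of_lt (by omega), add_zero]
  rw [hceil]
  zify [hMN, hsM, hM, hN, (by omega : s ≤ n₀ + 1), (by omega : M ≤ n₀ + 1),
    (by omega : M - s ≤ M * N), (by omega : 1 ≤ n₀ + 1 - M)]
  ring

section Optimal

variable {F κ ι : Type*} [Field F] [DecidableEq F] [Fintype κ] [DecidableEq κ] [Fintype ι]
  [DecidableEq ι] {n : ℕ}

theorem isOptimalLRCParams_blockCode_of_pos [Nonempty κ] (α : ι ↪ F) (e : Fin n ≃ κ × ι)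
    {M s : ℕ} (hs : 0 < s) (hsM : s ≤ M)
    (hM : M ≤ Fintype.card ι) (hd : Fintype.card ι + 1 - s ≤ 2 * (Fintype.card ι + 1 - M)) :
    IsOptimalLRCParams F n (M * Fintype.card κ - (M - s)) (Fintype.card ι + 1 - s) M
      (Fintype.card ι + 1 - M) := by
  have hn : n = Fintype.card κ * Fintype.card ι := by simpa using Fintype.card_congr e
  refine isOptimalLRCParams_of_equiv e _ (finrank_blockCode α hM)
    (hasMinDist_blockCode_of_pos α hs hsM (by omega) hd) (isLRC_blockCode α) ?_
  rw [hn]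
  exact lrc_singleton_bound_eq_of_pos Fintype.card_pos hs hsM hM

theorem isOptimalLRCParams_blockCode_zero (α : ι ↪ F) (e : Fin n ≃ κ × ι)
    (hκ : 2 ≤ Fintype.card κ) (hι : 0 < Fintype.card ι) :
    IsOptimalLRCParams F n (Fintype.card κ - 1) (2 * Fintype.card ι) 1 (Fintype.card ι) := by
  have hn : n = Fintype.card κ * Fintype.card ι := by simpa using Fintype.card_congr e
  obtain ⟨t₁, t₂, ht⟩ := Fintype.one_lt_card_iff_nontrivial.mp hκ |>.exists_pair_ne
  have : Nonempty κ := ⟨t₁⟩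
  have hk := finrank_blockCode (M := 1) (s := 0) (κ := κ) α hι
  have hd := hasMinDist_blockCode_zero α ht one_pos hι
  have hr := isLRC_blockCode (κ := κ) α (M := 1) (s := 0)
  simp only [one_mul, Nat.sub_zero, Nat.add_sub_cancel] at hk hd hr
  refine isOptimalLRCParams_of_equiv e _ hk hd hr ?_
  rw [hn, Nat.add_sub_cancel, Nat.div_one]
  zify [hκ, hι, (by omega : 1 ≤ Fintype.card κ), (by omega : 1 ≤ Fintype.card κ - 1)]
  ring

end Optimal

/-- Over a finite field `F_q`, for `m ≥ 3` and integers `2 ≤ n_j ≤ q`,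
there exist optimal `(r, δ)`-LRCs of length `n₁⋯n_m` with the three listed families of
parameters, for any index `j₀`. -/
theorem optimal_multivariate_params
    {F : Type*} [Field F] [Fintype F] [DecidableEq F] {m : ℕ} (hm : 3 ≤ m)
    (n : Fin m → ℕ) (hn : ∀ j, 2 ≤ n j) (hnq : ∀ j, n j ≤ Fintype.card F) (j0 : Fin m) :
    (∀ i0 : ℕ, i0 ≤ n j0 - 2 →
      IsOptimalLRCParams F (∏ j, n j) ((i0 + 1) * ∏ j ∈ Finset.univ.erase j0, n j)
        (n j0 - i0) (i0 + 1) (n j0 - i0)) ∧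
    (∀ i0 s : ℕ, max 1 (2 * i0 + 1 - n j0) ≤ s → s ≤ i0 → i0 ≤ n j0 - 2 →
      IsOptimalLRCParams F (∏ j, n j)
        (((i0 + 1) * ∏ j ∈ Finset.univ.erase j0, n j) - (i0 - s + 1))
        (n j0 - s + 1) (i0 + 1) (n j0 - i0)) ∧
    IsOptimalLRCParams F (∏ j, n j) ((∏ j ∈ Finset.univ.erase j0, n j) - 1)
      (2 * n j0) 1 (n j0) := by
  set N := ∏ j ∈ univ.erase j0, n j
  have hn₀ := hn j0
  have hN : 2 ≤ N := by
    obtain ⟨j1, hj1⟩ : (univ.erase j0).Nonempty := by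
      rw [← card_pos, card_erase_of_mem (mem_univ j0), card_univ, Fintype.card_fin]; omega
    exact (hn j1).trans (single_le_prod' (fun j _ => by have := hn j; omega) hj1)
  obtain ⟨α⟩ : Nonempty (Fin (n j0) ↪ F) :=
    Function.Embedding.nonempty_of_card_le (by simpa using hnq j0)
  let e : Fin (∏ j, n j) ≃ Fin N × Fin (n j0) :=
    (finCongr (prod_erase_mul univ n (mem_univ j0)).symm).trans finProdFinEquiv.symm
  have : Nonempty (Fin N) := ⟨⟨0, by omega⟩⟩
  refine ⟨fun i0 hi0 => ?_, fun i0 s hs hsi hi0 => ?_, ?_⟩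
  · simpa only [Fintype.card_fin, Nat.sub_self, Nat.sub_zero, Nat.add_sub_add_right] using
      isOptimalLRCParams_blockCode_of_pos α e (M := i0 + 1) (s := i0 + 1) (by omega) le_rfl
        (by rw [Fintype.card_fin]; omega) (by rw [Fintype.card_fin]; omega)
  · have h := isOptimalLRCParams_blockCode_of_pos α e (M := i0 + 1) (s := s) (by omega)
      (by omega) (by rw [Fintype.card_fin]; omega) (by rw [Fintype.card_fin]; omega)
    simp only [Fintype.card_fin, Nat.add_sub_add_right] at h
    convert h using 2 <;> omega
  · simpa only [Fintype.card_fin] using isOptimalLRCParams_blockCode_zero α e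
      (by rwa [Fintype.card_fin]) (by rw [Fintype.card_fin]; omega)
end
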